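/- arXiv:2509.19248 — 5 statements merged into one kernel-verified Lean document; each statement's English description precedes it below -/
import Mathlib

section
/- Let Γ be a finite simple graph on n vertices with matching number ν(Γ) = m. If Γ is not a vertex-disjoint union of triangles K₃ and isolated vertices (i.e., not every connected component of Γ is isomorphic to K₃ or to a single vertex), then mis(Γ) < 3^m. -/
/-- A set of vertices is independent: no two distinct members are adjacent. -/
def IsIndep {V : Type} (Γ : SimpleGraph V) (s : Set V) : Prop :=
  ∀ x ∈ s, ∀ y ∈ s, x ≠ y → ¬ Γ.Adj x y

/-- A maximal independent set. -/
def IsMaxIndep {V : Type} (Γ : SimpleGraph V) (s : Set V) : Prop :=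
  IsIndep Γ s ∧ ∀ t : Set V, IsIndep Γ t → s ⊆ t → t = s

/-- The number of maximal independent sets of a graph. -/
noncomputable def mis {V : Type} (Γ : SimpleGraph V) : ℕ :=
  Set.ncard {s : Set V | IsMaxIndep Γ s}

/-- A finite set of edges of `Γ` forming a matching (pairwise disjoint edges). -/
def IsMatchingSet {V : Type} (Γ : SimpleGraph V) (M : Finset (Sym2 V)) : Prop :=
  (∀ e ∈ M, e ∈ Γ.edgeSet) ∧
  ∀ e ∈ M, ∀ f ∈ M, e ≠ f → ∀ v : V, v ∈ e → v ∉ f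

/-- The matching number of a graph: the maximum size of a matching. -/
noncomputable def matchingNumber {V : Type} (Γ : SimpleGraph V) : ℕ :=
  sSup {m : ℕ | ∃ M : Finset (Sym2 V), IsMatchingSet Γ M ∧ M.card = m}


open SimpleGraph

/-- Auxiliary: a set closed under adjacency contains the whole reachability class. -/
lemma aux_reach_closed {V : Type} {Γ : SimpleGraph V} {T : Set V}
    (hT : ∀ x ∈ T, ∀ y, Γ.Adj x y → y ∈ T) {u v : V} (h : Γ.Reachable u v)
    (hu : u ∈ T) : v ∈ T := by
  obtain ⟨p⟩ := h
  induction p with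
  | nil => exact hu
  | cons hadj p ih => exact ih (hT _ hu _ hadj)

/-- Auxiliary: a vertex not adjacent to any member of a maximal independent set belongs to it. -/
lemma aux_mem_of_maxIndep {V : Type} {Γ : SimpleGraph V} {S : Set V}
    (hS : IsMaxIndep Γ S) {x : V} (hx : ∀ y ∈ S, ¬ Γ.Adj x y) : x ∈ S := by
  by_contra hxS
  have hind : IsIndep Γ (insert x S) := by
    rintro p (rfl | hp) q (rfl | hq) hpq
    · exact absurd rfl hpq
    · exact hx q hq
    · intro hadj; exact hx p hp hadj.symm
    · exact hS.1 p hp q hq hpq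
  have := hS.2 _ hind (Set.subset_insert _ _)
  exact hxS (this ▸ Set.mem_insert x S)

lemma aux_dominate {V : Type} {Γ : SimpleGraph V} {S : Set V}
    (hS : IsMaxIndep Γ S) {x : V} (hx : x ∉ S) : ∃ y ∈ S, Γ.Adj x y := by
  by_contra hcon
  push_neg at hcon
  exact hx (aux_mem_of_maxIndep hS hcon)

/-- K1 component iso. -/
lemma aux_iso_single {V : Type} (Γ : SimpleGraph V) (v : V) :
    Nonempty (Γ.induce ({v} : Set V) ≃g (⊤ : SimpleGraph (Fin 1))) := by
  refine ⟨⟨⟨fun _ => 0, fun _ => ⟨v, rfl⟩, ?_, ?_⟩, ?_⟩⟩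
  · intro x; exact Subtype.ext (show v = x.1 from x.2.symm)
  · intro x; exact Subsingleton.elim _ _
  · intro a b
    constructor
    · intro h; exact absurd (Subsingleton.elim _ _) h.ne
    · intro h
      exact absurd (Subtype.ext ((show a.1 = v from a.2).trans (show b.1 = v from b.2).symm)) h.ne

/-- K3 component iso. -/
lemma aux_iso_triple {V : Type} (Γ : SimpleGraph V) {a b w : V}
    (hab : a ≠ b) (haw : a ≠ w) (hbw : b ≠ w)
    (h1 : Γ.Adj a b) (h2 : Γ.Adj a w) (h3 : Γ.Adj b w) :
    Nonempty (Γ.induce ({a, b, w} : Set V) ≃g (⊤ : SimpleGraph (Fin 3))) := by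
  have adjT : ∀ x ∈ ({a, b, w} : Set V), ∀ y ∈ ({a, b, w} : Set V), x ≠ y → Γ.Adj x y := by
    rintro x (rfl | rfl | rfl) y (rfl | rfl | rfl) hxy <;>
      first
        | exact absurd rfl hxy
        | exact h1 | exact h2 | exact h3 | exact h1.symm | exact h2.symm | exact h3.symm
  have ha : a ∈ ({a, b, w} : Set V) := Or.inl rfl
  have hb : b ∈ ({a, b, w} : Set V) := Or.inr (Or.inl rfl)
  have hw : w ∈ ({a, b, w} : Set V) := Or.inr (Or.inr rfl)
  let f : Fin 3 → ({a, b, w} : Set V) := ![⟨a, ha⟩, ⟨b, hb⟩, ⟨w, hw⟩]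
  have hbij : Function.Bijective f := by
    constructor
    · intro i j hij
      fin_cases i <;> fin_cases j <;> simp_all [f] <;>
        first
          | rfl
          | exact absurd hij hab | exact absurd hij haw | exact absurd hij hbw
          | exact absurd hij.symm hab | exact absurd hij.symm haw | exact absurd hij.symm hbw
    · rintro ⟨x, hx | hx | hx⟩
      · exact ⟨0, Subtype.ext hx.symm⟩
      · exact ⟨1, Subtype.ext hx.symm⟩
      · exact ⟨2, Subtype.ext hx.symm⟩
  refine ⟨⟨(Equiv.ofBijective f hbij).symm, ?_⟩⟩
  intro x y
  rw [SimpleGraph.top_adj]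
  constructor
  · intro hne
    have hxy : x ≠ y := fun hh => hne (by rw [hh])
    exact adjT _ x.2 _ y.2 (fun hval => hxy (Subtype.ext hval))
  · intro hadj
    intro he
    exact hadj.ne ((Equiv.ofBijective f hbij).symm.injective he)

/-- Allowed per-edge trace values. -/
def EP {V : Type} (e : Sym2 V) (o : Option V) : Prop :=
  o = none ∨ ∃ x, x ∈ e ∧ o = some x

open scoped Classical in
/-- Trace of a vertex set on an edge. -/
noncomputable def trace {V : Type} (S : Set V) (e : Sym2 V) : {o : Option V // EP e o} :=
  if h : ∃ x, x ∈ S ∧ x ∈ e then ⟨some h.choose, Or.inr ⟨h.choose, h.choose_spec.2, rfl⟩⟩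
  else ⟨none, Or.inl rfl⟩

lemma trace_some {V : Type} {S : Set V} {e : Sym2 V} {x : V}
    (h : (trace S e).1 = some x) : x ∈ S ∧ x ∈ e := by
  classical
  unfold trace at h
  split at h
  · next h' =>
    obtain rfl : x = h'.choose := (Option.some.inj h).symm
    exact h'.choose_spec
  · exact absurd h (by simp)

lemma trace_none {V : Type} {S : Set V} {e : Sym2 V}
    (h : (trace S e).1 = none) : ∀ x ∈ S, x ∉ e := by
  classical
  unfold trace at h
  split at h
  · exact absurd h (by simp)
  · next h' =>
    intro x hx hxe
    exact h' ⟨x, hx, hxe⟩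

lemma card_EP {V : Type} [Fintype V] {e : Sym2 V} {a b : V} (hab : a ≠ b) (he : e = s(a, b)) :
    Nat.card {o : Option V // EP e o} = 3 := by
  classical
  have hset : {o : Option V | EP e o} = {none, some a, some b} := by
    ext o
    simp only [Set.mem_setOf_eq, EP, he, Sym2.mem_iff, Set.mem_insert_iff, Set.mem_singleton_iff]
    constructor
    · rintro (rfl | ⟨x, (rfl | rfl), rfl⟩)
      · exact Or.inl rfl
      · exact Or.inr (Or.inl rfl)
      · exact Or.inr (Or.inr rfl)
    · rintro (rfl | rfl | rfl)
      · exact Or.inl rfl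
      · exact Or.inr ⟨a, Or.inl rfl, rfl⟩
      · exact Or.inr ⟨b, Or.inr rfl, rfl⟩
  have : Nat.card {o : Option V // EP e o} = Set.ncard {o : Option V | EP e o} :=
    Nat.card_coe_set_eq _
  rw [this, hset]
  rw [Set.ncard_insert_of_notMem (by simp) (Set.toFinite _), Set.ncard_pair (by simpa using hab)]

theorem stmt1 {V : Type} [Fintype V] (Γ : SimpleGraph V) (m : ℕ)
    (hm : matchingNumber Γ = m)
    (h : ¬ ∀ c : Γ.ConnectedComponent,
        Nonempty (Γ.induce c.supp ≃g (⊤ : SimpleGraph (Fin 1))) ∨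
        Nonempty (Γ.induce c.supp ≃g (⊤ : SimpleGraph (Fin 3)))) :
    mis Γ < 3 ^ m := by
  classical
  -- Step A: extract a maximum matching
  have hA0 : (0 : ℕ) ∈ {k : ℕ | ∃ M : Finset (Sym2 V), IsMatchingSet Γ M ∧ M.card = k} :=
    ⟨∅, ⟨by simp, by simp⟩, by simp⟩
  have hbdd : BddAbove {k : ℕ | ∃ M : Finset (Sym2 V), IsMatchingSet Γ M ∧ M.card = k} := by
    refine ⟨Fintype.card (Sym2 V), ?_⟩
    rintro k ⟨M, -, rfl⟩
    exact M.card_le_univ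
  have hmem := Nat.sSup_mem ⟨0, hA0⟩ hbdd
  rw [show sSup {k : ℕ | ∃ M : Finset (Sym2 V), IsMatchingSet Γ M ∧ M.card = k}
      = matchingNumber Γ from rfl, hm] at hmem
  obtain ⟨M, hM, hMcard⟩ := hmem
  have hMmax : ∀ M' : Finset (Sym2 V), IsMatchingSet Γ M' → M'.card ≤ m := by
    intro M' h'
    rw [← hm]
    exact le_csSup hbdd ⟨M', h', rfl⟩
  -- Covered vertices
  set U : Set V := {v | ∃ e ∈ M, v ∈ e} with hU
  have edge_two : ∀ e ∈ M, ∃ a b : V, a ≠ b ∧ Γ.Adj a b ∧ e = s(a, b) := by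
    intro e he
    induction e using Sym2.ind with
    | _ a b =>
      have hadj : Γ.Adj a b := (Γ.mem_edgeSet).1 (hM.1 _ he)
      exact ⟨a, b, hadj.ne, hadj, rfl⟩
  have cover_unique : ∀ S : Set V, IsIndep Γ S → ∀ e ∈ M, ∀ x ∈ S, ∀ y ∈ S,
      x ∈ e → y ∈ e → x = y := by
    intro S hS e he x hx y hy hxe hye
    obtain ⟨a, b, hab, hadj, rfl⟩ := edge_two e he
    by_contra hne
    rcases Sym2.mem_iff.1 hxe with rfl | rfl <;> rcases Sym2.mem_iff.1 hye with rfl | rfl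
    · exact hne rfl
    · exact hS x hx y hy hne hadj
    · exact hS x hx y hy hne hadj.symm
    · exact hne rfl
  have W_not_adj : ∀ w1 ∉ U, ∀ w2 ∉ U, ¬ Γ.Adj w1 w2 := by
    intro w1 h1 w2 h2 hadj
    have hnm : s(w1, w2) ∉ M := fun hmem => h1 ⟨_, hmem, Sym2.mem_mk_left _ _⟩
    have hmatch : IsMatchingSet Γ (insert s(w1, w2) M) := by
      constructor
      · intro e he
        rcases Finset.mem_insert.1 he with rfl | he
        · exact (Γ.mem_edgeSet).2 hadj
        · exact hM.1 _ he
      · intro e he f hf hef v hve hvf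
        rcases Finset.mem_insert.1 he with rfl | he
        · rcases Finset.mem_insert.1 hf with rfl | hf
          · exact hef rfl
          · rcases Sym2.mem_iff.1 hve with h' | h'
            · rw [h'] at hvf; exact h1 ⟨f, hf, hvf⟩
            · rw [h'] at hvf; exact h2 ⟨f, hf, hvf⟩
        · rcases Finset.mem_insert.1 hf with hf' | hf
          · rw [hf'] at hvf
            rcases Sym2.mem_iff.1 hvf with h' | h'
            · rw [h'] at hve; exact h1 ⟨e, he, hve⟩
            · rw [h'] at hve; exact h2 ⟨e, he, hve⟩
          · exact hM.2 e he f hf hef v hve hvf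
    have := hMmax _ hmatch
    rw [Finset.card_insert_of_notMem hnm, hMcard] at this
    omega
  -- determination of MIS by trace on U
  have determined : ∀ S1 S2 : Set V, IsMaxIndep Γ S1 → IsMaxIndep Γ S2 →
      S1 ∩ U = S2 ∩ U → S1 = S2 := by
    have key : ∀ S1 S2 : Set V, IsMaxIndep Γ S1 → IsMaxIndep Γ S2 →
        S1 ∩ U = S2 ∩ U → S1 ⊆ S2 := by
      intro S1 S2 h1 h2 hEq x hx
      by_cases hxU : x ∈ U
      · exact (hEq ▸ (Set.mem_inter hx hxU)).1
      · refine aux_mem_of_maxIndep h2 ?_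
        intro y hy
        by_cases hyU : y ∈ U
        · have hyS1 : y ∈ S1 := (hEq.symm ▸ (Set.mem_inter hy hyU)).1
          intro hadj
          exact h1.1 x hx y hyS1 hadj.ne hadj
        · exact W_not_adj x hxU y hyU
    intro S1 S2 h1 h2 hEq
    exact Set.Subset.antisymm (key S1 S2 h1 h2 hEq) (key S2 S1 h2 h1 hEq.symm)
  -- Step D : counting
  have htraceM : ∀ S : Set V, IsIndep Γ S → ∀ e ∈ M, ∀ x ∈ S, x ∈ e →
      (trace S e).1 = some x := by
    intro S hS e he x hx hxe
    rcases h' : (trace S e).1 with _ | y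
    · exact absurd hxe (trace_none h' x hx)
    · obtain ⟨hyS, hye⟩ := trace_some h'
      rw [cover_unique S hS e he y hyS x hx hye hxe]
  let Φ : {s : Set V // IsMaxIndep Γ s} →
      (∀ e : {e : Sym2 V // e ∈ M}, {o : Option V // EP e.1 o}) :=
    fun S e => trace S.1 e.1
  have key : ∀ S1 S2 : {s : Set V // IsMaxIndep Γ s}, Φ S1 = Φ S2 →
      S1.1 ∩ U ⊆ S2.1 ∩ U := by
    rintro S1 S2 hEq x ⟨hx, e, he, hxe⟩
    have h1 : (trace S1.1 e).1 = some x := htraceM _ S1.2.1 e he x hx hxe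
    have h2 : (trace S2.1 e).1 = some x := by
      have := congrFun hEq ⟨e, he⟩
      simp only [Φ] at this
      rw [← this]
      exact h1
    exact ⟨(trace_some h2).1, e, he, hxe⟩
  have Φinj : Function.Injective Φ := fun S1 S2 hEq =>
    Subtype.ext (determined _ _ S1.2 S2.2
      (Set.Subset.antisymm (key S1 S2 hEq) (key S2 S1 hEq.symm)))
  have hmis : mis Γ = Nat.card {s : Set V // IsMaxIndep Γ s} :=
    (Nat.card_coe_set_eq _).symm
  have cardF : Nat.card (∀ e : {e : Sym2 V // e ∈ M}, {o : Option V // EP e.1 o}) = 3 ^ m := by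
    rw [Nat.card_pi]
    calc ∏ e : {e : Sym2 V // e ∈ M}, Nat.card {o : Option V // EP e.1 o}
        = ∏ _e : {e : Sym2 V // e ∈ M}, 3 := by
          refine Finset.prod_congr rfl (fun e _ => ?_)
          obtain ⟨a, b, hab, -, he⟩ := edge_two e.1 e.2
          exact card_EP hab he
      _ = 3 ^ m := by
          rw [Finset.prod_const, Finset.card_univ, Fintype.card_coe, hMcard]
  have hle : mis Γ ≤ 3 ^ m := by
    rw [hmis, ← cardF]
    exact Nat.card_le_card_of_injective _ Φinj
  by_contra hcon
  have hEq3 : mis Γ = 3 ^ m := le_antisymm hle (not_lt.1 hcon)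
  have hbij : Function.Bijective Φ :=
    (Nat.bijective_iff_injective_and_card Φ).2 ⟨Φinj, by rw [← hmis, hEq3, cardF]⟩
  have realize : ∀ c : Sym2 V → Option V, (∀ e ∈ M, EP e (c e)) →
      ∃ S : Set V, IsMaxIndep Γ S ∧ ∀ e ∈ M, (trace S e).1 = c e := by
    intro c hc
    obtain ⟨S, hS⟩ := hbij.2 (fun e => ⟨c e.1, hc e.1 e.2⟩)
    refine ⟨S.1, S.2, fun e he => ?_⟩
    have := congrFun hS ⟨e, he⟩
    simp only [Φ] at this
    rw [this]
  -- all-none pattern : the uncovered set is a maximal independent set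
  obtain ⟨S0, hS0, hS0tr⟩ := realize (fun _ => none) (fun e _ => Or.inl rfl)
  have hS0W : S0 = Uᶜ := by
    have hsub : S0 ⊆ Uᶜ := by
      intro x hx hxU
      obtain ⟨e, he, hxe⟩ := hxU
      exact trace_none (hS0tr e he) x hx hxe
    refine Set.Subset.antisymm hsub ?_
    intro x hxU
    exact aux_mem_of_maxIndep hS0 (fun y hy => W_not_adj x hxU y (hsub hy))
  have hWdom : ∀ u ∈ U, ∃ w, w ∉ U ∧ Γ.Adj u w := by
    intro u hu
    have hu' : u ∉ S0 := by rw [hS0W]; exact fun hc => hc hu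
    obtain ⟨y, hyS, hyadj⟩ := aux_dominate hS0 hu'
    rw [hS0W] at hyS
    exact ⟨y, hyS, hyadj⟩
  -- matching swap argument
  have swap : ∀ e ∈ M, ∀ a b : V, e = s(a, b) → a ≠ b → ∀ w1 w2 : V, w1 ∉ U → w2 ∉ U →
      Γ.Adj a w1 → Γ.Adj b w2 → w1 = w2 := by
    intro e he a b hEab hne w1 w2 hw1U hw2U h1 h2
    by_contra hww
    have haU : a ∈ U := ⟨e, he, by rw [hEab]; exact Sym2.mem_mk_left _ _⟩
    have hbU : b ∈ U := ⟨e, he, by rw [hEab]; exact Sym2.mem_mk_right _ _⟩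
    have h1mem : s(b, w2) ∉ M.erase e := fun hc =>
      hw2U ⟨_, Finset.mem_of_mem_erase hc, Sym2.mem_mk_right _ _⟩
    have h2mem : s(a, w1) ∉ insert s(b, w2) (M.erase e) := by
      intro hc
      rcases Finset.mem_insert.1 hc with hc | hc
      · have : w1 ∈ s(b, w2) := by rw [← hc]; exact Sym2.mem_mk_right _ _
        rcases Sym2.mem_iff.1 this with h' | h'
        · exact hw1U (h' ▸ hbU)
        · exact hww h'
      · exact hw1U ⟨_, Finset.mem_of_mem_erase hc, Sym2.mem_mk_right _ _⟩
    have hcard : (insert s(a, w1) (insert s(b, w2) (M.erase e))).card = m + 1 := by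
      rw [Finset.card_insert_of_notMem h2mem, Finset.card_insert_of_notMem h1mem,
        Finset.card_erase_of_mem he, hMcard]
      have : 1 ≤ m := by rw [← hMcard]; exact Finset.card_pos.2 ⟨e, he⟩
      omega
    -- helper for vertices of old edges
    have hold : ∀ f ∈ M.erase e, ∀ v ∈ f, v ∈ U ∧ v ∉ e := by
      intro f hf v hv
      exact ⟨⟨f, Finset.mem_of_mem_erase hf, hv⟩,
        fun hve => hM.2 e he f (Finset.mem_of_mem_erase hf)
          (Finset.ne_of_mem_erase hf).symm v hve hv⟩
    have hmatch : IsMatchingSet Γ (insert s(a, w1) (insert s(b, w2) (M.erase e))) := by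
      constructor
      · intro f hf
        rcases Finset.mem_insert.1 hf with rfl | hf
        · exact (Γ.mem_edgeSet).2 h1
        · rcases Finset.mem_insert.1 hf with rfl | hf
          · exact (Γ.mem_edgeSet).2 h2
          · exact hM.1 _ (Finset.mem_of_mem_erase hf)
      · intro f1 hf1 f2 hf2 hne12 v hv1 hv2
        rcases Finset.mem_insert.1 hf1 with h1' | hf1
        · rcases Finset.mem_insert.1 hf2 with h2' | hf2
          · exact hne12 (h1'.trans h2'.symm)
          · rw [h1'] at hv1
            rcases Finset.mem_insert.1 hf2 with h2' | hf2
            · rw [h2'] at hv2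
              rcases Sym2.mem_iff.1 hv1 with h' | h' <;>
                rcases Sym2.mem_iff.1 hv2 with h'' | h''
              · exact hne (h'.symm.trans h'')
              · exact hw2U (h''.symm ▸ (h'.symm ▸ haU))
              · exact hw1U (h'.symm ▸ (h''.symm ▸ hbU))
              · exact hww (h'.symm.trans h'')
            · rcases Sym2.mem_iff.1 hv1 with h' | h'
              · have := (hold f2 hf2 v hv2).2
                rw [h', hEab] at this
                exact this (Sym2.mem_mk_left _ _)
              · exact hw1U (h' ▸ (hold f2 hf2 v hv2).1)
        · rcases Finset.mem_insert.1 hf1 with h1' | hf1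
          · rw [h1'] at hv1
            rcases Finset.mem_insert.1 hf2 with h2' | hf2
            · rw [h2'] at hv2
              rcases Sym2.mem_iff.1 hv1 with h' | h' <;>
                rcases Sym2.mem_iff.1 hv2 with h'' | h''
              · exact hne (h''.symm.trans h')
              · exact hw1U (h''.symm ▸ (h'.symm ▸ hbU))
              · exact hw2U (h'.symm ▸ (h''.symm ▸ haU))
              · exact hww (h''.symm.trans h')
            · rcases Finset.mem_insert.1 hf2 with h2' | hf2
              · exact hne12 (h1'.trans h2'.symm)
              · rcases Sym2.mem_iff.1 hv1 with h' | h'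
                · have := (hold f2 hf2 v hv2).2
                  rw [h', hEab] at this
                  exact this (Sym2.mem_mk_right _ _)
                · exact hw2U (h' ▸ (hold f2 hf2 v hv2).1)
          · rcases Finset.mem_insert.1 hf2 with h2' | hf2
            · rw [h2'] at hv2
              rcases Sym2.mem_iff.1 hv2 with h' | h'
              · have := (hold f1 hf1 v hv1).2
                rw [h', hEab] at this
                exact this (Sym2.mem_mk_left _ _)
              · exact hw1U (h' ▸ (hold f1 hf1 v hv1).1)
            · rcases Finset.mem_insert.1 hf2 with h2' | hf2
              · rw [h2'] at hv2
                rcases Sym2.mem_iff.1 hv2 with h' | h'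
                · have := (hold f1 hf1 v hv1).2
                  rw [h', hEab] at this
                  exact this (Sym2.mem_mk_right _ _)
                · exact hw2U (h' ▸ (hold f1 hf1 v hv1).1)
              · exact hM.2 f1 (Finset.mem_of_mem_erase hf1) f2
                  (Finset.mem_of_mem_erase hf2) hne12 v hv1 hv2
    have := hMmax _ hmatch
    omega
  -- the canonical uncovered neighbour of each matching edge
  have fact2 : ∀ e ∈ M, ∀ a b : V, e = s(a, b) → a ≠ b →
      ∃ w, w ∉ U ∧ Γ.Adj a w ∧ Γ.Adj b w ∧
        (∀ w', w' ∉ U → (Γ.Adj a w' ∨ Γ.Adj b w') → w' = w) := by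
    intro e he a b hEab hne
    have haU : a ∈ U := ⟨e, he, by rw [hEab]; exact Sym2.mem_mk_left _ _⟩
    have hbU : b ∈ U := ⟨e, he, by rw [hEab]; exact Sym2.mem_mk_right _ _⟩
    obtain ⟨w1, hw1U, hw1⟩ := hWdom a haU
    obtain ⟨w2, hw2U, hw2⟩ := hWdom b hbU
    have heq : w1 = w2 := swap e he a b hEab hne w1 w2 hw1U hw2U hw1 hw2
    rw [← heq] at hw2 hw2U
    refine ⟨w1, hw1U, hw1, hw2, ?_⟩
    intro w' hw'U hadj'
    rcases hadj' with h' | h'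
    · exact swap e he a b hEab hne w' w1 hw'U hw1U h' hw2
    · exact (swap e he a b hEab hne w1 w' hw1U hw'U hw1 h').symm
  -- no edges between distinct matching edges
  have fact3 : ∀ e ∈ M, ∀ e' ∈ M, e ≠ e' → ∀ x ∈ e, ∀ y ∈ e', ¬ Γ.Adj x y := by
    intro e he e' he' hee x hxe y hye hadj
    obtain ⟨S, hS, hStr⟩ :=
      realize (fun q => if q = e then some x else if q = e' then some y else none) (by
        intro q hq
        by_cases hqe : q = e
        · exact Or.inr ⟨x, by rw [hqe]; exact hxe, by simp [hqe]⟩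
        · by_cases hqe' : q = e'
          · exact Or.inr ⟨y, by rw [hqe']; exact hye, by simp [hqe', Ne.symm hee]⟩
          · exact Or.inl (by simp [hqe, hqe']))
    have hxS : x ∈ S := by
      have h' : (trace S e).1 = some x := by rw [hStr e he]; simp
      exact (trace_some h').1
    have hyS : y ∈ S := by
      have h' : (trace S e').1 = some y := by
        rw [hStr e' he']; simp only []; rw [if_neg (Ne.symm hee)]; simp
      exact (trace_some h').1
    have hxy : x ≠ y := fun hc => (hM.2 e he e' he' hee x hxe (hc ▸ hye))
    exact hS.1 x hxS y hyS hxy hadj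
  -- the canonical neighbours of distinct edges are distinct / not shared
  have fact4 : ∀ e ∈ M, ∀ a b : V, e = s(a, b) → a ≠ b → ∀ w, w ∉ U →
      Γ.Adj a w → Γ.Adj b w → ∀ e' ∈ M, e' ≠ e → ∀ x ∈ e', ¬ Γ.Adj x w := by
    intro e he a b hEab hne w hwU hadjaw hadjbw e' he' hne'' x hxe' hadjxw
    obtain ⟨a', b', hne', hadj', hEab'⟩ := edge_two e' he'
    obtain ⟨w', hw'U, hw'a, hw'b, huniq'⟩ := fact2 e' he' a' b' hEab' hne'
    have hxcase : x = a' ∨ x = b' := Sym2.mem_iff.1 (by rw [← hEab']; exact hxe')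
    have hwweq : w = w' := by
      refine huniq' w hwU ?_
      rcases hxcase with h' | h'
      · exact Or.inl (h' ▸ hadjxw)
      · exact Or.inr (h' ▸ hadjxw)
    obtain ⟨S, hS, hStr⟩ :=
      realize (fun q => if q = e then some a else none) (by
        intro q hq
        by_cases hqe : q = e
        · exact Or.inr ⟨a, by rw [hqe, hEab]; exact Sym2.mem_mk_left _ _, by simp [hqe]⟩
        · exact Or.inl (by simp [hqe]))
    have haS : a ∈ S := by
      have h' : (trace S e).1 = some a := by rw [hStr e he]; simp
      exact (trace_some h').1
    have hxS : x ∉ S := by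
      intro hc
      have h' : (trace S e').1 = none := by rw [hStr e' he']; simp [hne'']
      exact trace_none h' x hc hxe'
    obtain ⟨y, hyS, hyadj⟩ := aux_dominate hS hxS
    by_cases hyU : y ∈ U
    · obtain ⟨f, hf, hyf⟩ := hyU
      by_cases hfe : f = e
      · exact fact3 e' he' e he hne'' x hxe' y (hfe ▸ hyf) hyadj
      · have h' : (trace S f).1 = none := by rw [hStr f hf]; simp [hfe]
        exact trace_none h' y hyS hyf
    · have hyw : y = w := by
        rw [hwweq]
        refine huniq' y hyU ?_
        rcases hxcase with h' | h'
        · exact Or.inl (h' ▸ hyadj)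
        · exact Or.inr (h' ▸ hyadj)
      have haw : a ≠ w := fun hc =>
        hwU (hc ▸ (⟨e, he, by rw [hEab]; exact Sym2.mem_mk_left _ _⟩ : a ∈ U))
      exact hS.1 a haS y hyS (fun hc => haw (hc.trans hyw)) (show Γ.Adj a y by rw [hyw]; exact hadjaw)
  -- classification of the connected components
  refine h ?_
  intro c
  obtain ⟨v, hv⟩ := c.exists_rep
  by_cases hUc : ∃ u, u ∈ U ∧ Γ.connectedComponentMk u = c
  · -- triangle component
    obtain ⟨u, ⟨e, he, hue⟩, huc⟩ := hUc
    obtain ⟨a, b, hne, hadj, hEab⟩ := edge_two e he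
    obtain ⟨w, hwU, hwa, hwb, huniq⟩ := fact2 e he a b hEab hne
    have haU : a ∈ U := ⟨e, he, by rw [hEab]; exact Sym2.mem_mk_left _ _⟩
    have hbU : b ∈ U := ⟨e, he, by rw [hEab]; exact Sym2.mem_mk_right _ _⟩
    have haw : a ≠ w := fun hc => hwU (hc ▸ haU)
    have hbw : b ≠ w := fun hc => hwU (hc ▸ hbU)
    have hclosed : ∀ x ∈ ({a, b, w} : Set V), ∀ y, Γ.Adj x y → y ∈ ({a, b, w} : Set V) := by
      intro x hx y hady
      rcases hx with hxa | hxb | hxw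
      · rw [hxa] at hady
        by_cases hyU : y ∈ U
        · obtain ⟨f, hf, hyf⟩ := hyU
          by_cases hfe : f = e
          · rw [hfe, hEab] at hyf
            rcases Sym2.mem_iff.1 hyf with h' | h'
            · exact Or.inl h'
            · exact Or.inr (Or.inl h')
          · exact absurd hady (fact3 e he f hf (fun hc => hfe hc.symm) a
              (by rw [hEab]; exact Sym2.mem_mk_left _ _) y hyf)
        · exact Or.inr (Or.inr (huniq y hyU (Or.inl hady)))
      · rw [hxb] at hady
        by_cases hyU : y ∈ U
        · obtain ⟨f, hf, hyf⟩ := hyU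
          by_cases hfe : f = e
          · rw [hfe, hEab] at hyf
            rcases Sym2.mem_iff.1 hyf with h' | h'
            · exact Or.inl h'
            · exact Or.inr (Or.inl h')
          · exact absurd hady (fact3 e he f hf (fun hc => hfe hc.symm) b
              (by rw [hEab]; exact Sym2.mem_mk_right _ _) y hyf)
        · exact Or.inr (Or.inr (huniq y hyU (Or.inr hady)))
      · rw [hxw] at hady
        by_cases hyU : y ∈ U
        · obtain ⟨f, hf, hyf⟩ := hyU
          by_cases hfe : f = e
          · rw [hfe, hEab] at hyf
            rcases Sym2.mem_iff.1 hyf with h' | h'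
            · exact Or.inl h'
            · exact Or.inr (Or.inl h')
          · exact absurd hady.symm (fact4 e he a b hEab hne w hwU hwa hwb f hf hfe y hyf)
        · exact absurd hady (W_not_adj w hwU y hyU)
    have hcc : Γ.connectedComponentMk a = c := by
      rw [hEab] at hue
      rcases Sym2.mem_iff.1 hue with h' | h'
      · rw [← h']
        exact huc
      · have hba : Γ.connectedComponentMk a = Γ.connectedComponentMk b :=
          SimpleGraph.ConnectedComponent.eq.2 hadj.reachable
        rw [hba, ← h']
        exact huc
    have hsupp : c.supp = ({a, b, w} : Set V) := by
      ext x
      rw [SimpleGraph.ConnectedComponent.mem_supp_iff]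
      constructor
      · intro hx
        have hreach : Γ.Reachable a x :=
          SimpleGraph.ConnectedComponent.eq.1 (hcc.trans hx.symm)
        exact aux_reach_closed hclosed hreach (Or.inl rfl)
      · intro hx
        rcases hx with h' | h' | h'
        · rw [h']
          exact hcc
        · have : Γ.connectedComponentMk b = Γ.connectedComponentMk a :=
            SimpleGraph.ConnectedComponent.eq.2 hadj.symm.reachable
          rw [h', this]
          exact hcc
        · have : Γ.connectedComponentMk w = Γ.connectedComponentMk a :=
            SimpleGraph.ConnectedComponent.eq.2 hwa.symm.reachable
          rw [h', this]
          exact hcc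
    right
    rw [hsupp]
    exact aux_iso_triple Γ hne haw hbw hadj hwa hwb
  · -- singleton component
    push_neg at hUc
    have hvU : v ∉ U := fun hc => hUc v hc hv
    have hiso : ∀ y, ¬ Γ.Adj v y := by
      intro y hady
      by_cases hyU : y ∈ U
      · exact hUc y hyU ((SimpleGraph.ConnectedComponent.eq.2 hady.symm.reachable).trans hv)
      · exact W_not_adj v hvU y hyU hady
    have hclosed : ∀ x ∈ ({v} : Set V), ∀ y, Γ.Adj x y → y ∈ ({v} : Set V) := by
      intro x hx y hady
      rw [(hx : x = v)] at hady
      exact absurd hady (hiso y)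
    have hsupp : c.supp = ({v} : Set V) := by
      ext x
      rw [SimpleGraph.ConnectedComponent.mem_supp_iff]
      constructor
      · intro hx
        have hreach : Γ.Reachable v x :=
          SimpleGraph.ConnectedComponent.eq.1 (hv.trans hx.symm)
        exact aux_reach_closed hclosed hreach rfl
      · intro hx
        rw [(hx : x = v)]
        exact hv
    left
    rw [hsupp]
    exact aux_iso_single Γ v
end

section
/- Let Γ be a finite simple graph on n vertices that contains a perfect matching (so n is even). Then the number of maximal independent sets of Γ satisfies mis(Γ) ≤ 2^{n/2}. -/
open Finset

section Aux

variable {V : Type} [Fintype V]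

/-- `s` is a maximal independent set relative to the vertex set `A`. -/
def Good (Γ : SimpleGraph V) (A s : Finset V) : Prop :=
  s ⊆ A ∧ (∀ x ∈ s, ∀ y ∈ s, x ≠ y → ¬ Γ.Adj x y) ∧
    ∀ x ∈ A, x ∉ s → ∃ y ∈ s, Γ.Adj x y

noncomputable def goodF (Γ : SimpleGraph V) (A : Finset V) : Finset (Finset V) :=
  @Finset.filter _ (fun s => Good Γ A s) (Classical.decPred _) Finset.univ

lemma mem_goodF {Γ : SimpleGraph V} {A s : Finset V} : s ∈ goodF Γ A ↔ Good Γ A s := by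
  unfold goodF
  exact (@Finset.mem_filter (Finset V) (fun s => Good Γ A s) (Classical.decPred _)
    Finset.univ s).trans (and_iff_right (Finset.mem_univ _))

/-- Key lemma: the weighted count of relative maximal independent sets is at most `2^|A|`. -/
lemma sumC (Γ : SimpleGraph V) (A : Finset V) :
    ∑ s ∈ goodF Γ A, 2 ^ s.card ≤ 2 ^ A.card := by
  classical
  induction A using Finset.strongInduction with
  | _ A ih =>
  by_cases hE : ∃ v ∈ A, ∃ u ∈ A, Γ.Adj v u
  · obtain ⟨v, hv, u, hu, hadj⟩ := hE
    have hvu : v ≠ u := Γ.ne_of_adj hadj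
    have hsplit := Finset.sum_filter_add_sum_filter_not (goodF Γ A)
      (fun s => v ∈ s) (fun s => 2 ^ s.card)
    -- Part with v ∉ s
    have hpart2 : ∑ s ∈ (goodF Γ A).filter (fun s => ¬ v ∈ s), 2 ^ s.card
        ≤ 2 ^ (A.erase v).card := by
      refine le_trans (Finset.sum_le_sum_of_subset ?_) (ih (A.erase v) (Finset.erase_ssubset hv))
      intro s hs
      rw [Finset.mem_filter] at hs
      obtain ⟨hs, hvs⟩ := hs
      rw [mem_goodF] at hs ⊢
      obtain ⟨hsub, hind, hdom⟩ := hs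
      refine ⟨fun x hx => Finset.mem_erase.2 ⟨fun h => hvs (h ▸ hx), hsub hx⟩, hind, ?_⟩
      intro x hx hxs
      exact hdom x (Finset.mem_of_mem_erase hx) hxs
    -- Part with v ∈ s
    set A' : Finset V := (A.erase v).filter (fun x => ¬ Γ.Adj v x) with hA'
    have hA'v : v ∉ A' := by
      intro h
      rw [hA', Finset.mem_filter, Finset.mem_erase] at h
      exact h.1.1 rfl
    have hA'u : u ∉ A' := by
      intro h
      rw [hA', Finset.mem_filter] at h
      exact h.2 hadj
    have hA'subA : A' ⊆ A := fun x hx => by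
      rw [hA', Finset.mem_filter, Finset.mem_erase] at hx
      exact hx.1.2
    have hA'ss : A' ⊂ A := ⟨hA'subA, fun h => hA'v (h hv)⟩
    have hA'card : A'.card + 2 ≤ A.card := by
      have h1 : A' ⊆ (A.erase u).erase v := by
        intro x hx
        rw [hA', Finset.mem_filter, Finset.mem_erase] at hx
        refine Finset.mem_erase.2 ⟨hx.1.1, Finset.mem_erase.2 ⟨?_, hx.1.2⟩⟩
        rintro rfl
        exact hx.2 hadj
      have h2 : v ∈ A.erase u := Finset.mem_erase.2 ⟨hvu, hv⟩
      have h3 := Finset.card_erase_add_one h2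
      have h4 := Finset.card_erase_add_one hu
      have h5 := Finset.card_le_card h1
      omega
    have hpart1 : ∑ s ∈ (goodF Γ A).filter (fun s => v ∈ s), 2 ^ s.card
        ≤ 2 * 2 ^ A'.card := by
      set F1 := (goodF Γ A).filter (fun s => v ∈ s) with hF1
      have hvmem : ∀ s ∈ F1, v ∈ s := by
        intro s hs; rw [hF1, Finset.mem_filter] at hs; exact hs.2
      have hcard : ∀ s ∈ F1, 2 ^ s.card = 2 * 2 ^ ((s.erase v).card) := by
        intro s hs
        have := Finset.card_erase_add_one (hvmem s hs)
        rw [← this]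
        ring
      rw [Finset.sum_congr rfl hcard, ← Finset.mul_sum]
      have hinj : ∀ x ∈ F1, ∀ y ∈ F1, x.erase v = y.erase v → x = y := by
        intro x hx y hy h
        have := Finset.insert_erase (hvmem x hx)
        rw [← this, h, Finset.insert_erase (hvmem y hy)]
      have himg : F1.image (fun s => s.erase v) ⊆ goodF Γ A' := by
        intro t ht
        rw [Finset.mem_image] at ht
        obtain ⟨s, hs, rfl⟩ := ht
        have hvs := hvmem s hs
        rw [hF1, Finset.mem_filter, mem_goodF] at hs
        obtain ⟨⟨hsub, hind, hdom⟩, -⟩ := hs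
        rw [mem_goodF]
        refine ⟨?_, ?_, ?_⟩
        · intro x hx
          have hxv := (Finset.mem_erase.1 hx).1
          have hxs := Finset.mem_of_mem_erase hx
          rw [hA', Finset.mem_filter, Finset.mem_erase]
          exact ⟨⟨hxv, hsub hxs⟩, hind v hvs x hxs (Ne.symm hxv)⟩
        · intro x hx y hy
          exact hind x (Finset.mem_of_mem_erase hx) y (Finset.mem_of_mem_erase hy)
        · intro x hx hxt
          have hxA' := hx
          rw [hA', Finset.mem_filter, Finset.mem_erase] at hxA'
          have hxs : x ∉ s := by
            intro h
            exact hxt (Finset.mem_erase.2 ⟨hxA'.1.1, h⟩)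
          obtain ⟨y, hy, hxy⟩ := hdom x (hxA'.1.2) hxs
          refine ⟨y, Finset.mem_erase.2 ⟨?_, hy⟩, hxy⟩
          rintro rfl
          exact hxA'.2 (Γ.adj_symm hxy)
      calc 2 * ∑ s ∈ F1, 2 ^ ((s.erase v).card)
          = 2 * ∑ t ∈ F1.image (fun s => s.erase v), 2 ^ t.card := by
            rw [Finset.sum_image hinj]
        _ ≤ 2 * ∑ t ∈ goodF Γ A', 2 ^ t.card :=
            Nat.mul_le_mul_left 2 (Finset.sum_le_sum_of_subset himg)
        _ ≤ 2 * 2 ^ A'.card := Nat.mul_le_mul_left 2 (ih A' hA'ss)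
    have hAv := Finset.card_erase_add_one hv
    have hA1 : 1 ≤ A.card := by
      have := Finset.card_pos.2 ⟨v, hv⟩
      omega
    calc ∑ s ∈ goodF Γ A, 2 ^ s.card
        = ∑ s ∈ (goodF Γ A).filter (fun s => v ∈ s), 2 ^ s.card
          + ∑ s ∈ (goodF Γ A).filter (fun s => ¬ v ∈ s), 2 ^ s.card := hsplit.symm
      _ ≤ 2 * 2 ^ A'.card + 2 ^ (A.erase v).card := Nat.add_le_add hpart1 hpart2
      _ ≤ 2 ^ (A.card - 1) + 2 ^ (A.card - 1) := by
          have h1 : A'.card + 1 ≤ A.card - 1 := by omega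
          have h2 : (A.erase v).card = A.card - 1 := by omega
          have h3 : 2 * 2 ^ A'.card = 2 ^ (A'.card + 1) := by ring
          rw [h3, h2]
          exact Nat.add_le_add_right (Nat.pow_le_pow_right (by norm_num) h1) _
      _ = 2 ^ A.card := by
          have : 2 ^ (A.card - 1) + 2 ^ (A.card - 1) = 2 ^ (A.card - 1 + 1) := by ring
          rw [this]
          congr 1
          omega
  · push_neg at hE
    have hgA : goodF Γ A = {A} := by
      ext s
      rw [mem_goodF, Finset.mem_singleton]
      constructor
      · rintro ⟨hsub, -, hdom⟩
        by_contra hne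
        obtain ⟨x, hxA, hxs⟩ := Finset.exists_of_ssubset ⟨hsub, fun h => hne (Finset.Subset.antisymm hsub h)⟩
        obtain ⟨y, hy, hxy⟩ := hdom x hxA hxs
        exact hE x hxA y (hsub hy) hxy
      · rintro rfl
        exact ⟨Finset.Subset.refl _, fun x hx y hy _ => hE x hx y hy,
          fun x hx hxs => absurd hx hxs⟩
    rw [hgA, Finset.sum_singleton]

end Aux

theorem stmt3 {V : Type} [Fintype V] (Γ : SimpleGraph V)
    (M : Finset (Sym2 V)) (hM : IsMatchingSet Γ M)
    (hperf : ∀ v : V, ∃ e ∈ M, v ∈ e) :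
    (mis Γ : ℝ) ≤ (2 : ℝ) ^ ((Fintype.card V : ℝ) / 2) := by
  classical
  set m := M.card with hm
  -- endpoints of edges
  set a : {e : Sym2 V // e ∈ M} → V := fun e => (e : Sym2 V).out.1 with ha
  set b : {e : Sym2 V // e ∈ M} → V := fun e => (e : Sym2 V).out.2 with hb
  have hamem : ∀ e : {e : Sym2 V // e ∈ M}, a e ∈ (e : Sym2 V) := fun e => Sym2.out_fst_mem _
  have hbmem : ∀ e : {e : Sym2 V // e ∈ M}, b e ∈ (e : Sym2 V) := fun e => Sym2.out_snd_mem _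
  have hadj : ∀ (e : {e : Sym2 V // e ∈ M}) (x y : V),
      x ∈ (e : Sym2 V) → y ∈ (e : Sym2 V) → x ≠ y → Γ.Adj x y := by
    intro e x y hx hy hxy
    exact (Γ.adj_iff_exists_edge).2 ⟨hxy, (e : Sym2 V), hM.1 _ e.2, hx, hy⟩
  have hab : ∀ e : {e : Sym2 V // e ∈ M}, a e ≠ b e := by
    intro e h
    have hd : ((e : Sym2 V)).IsDiag := by
      have : (e : Sym2 V) = Sym2.mk (e : Sym2 V).out.1 (e : Sym2 V).out.2 := by
        rw [Sym2.mk]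
        exact ((e : Sym2 V).out_eq).symm
      rw [this, Sym2.isDiag_iff_proj_eq]
      exact h
    exact Γ.not_isDiag_of_mem_edgeSet (hM.1 _ e.2) hd
  have huniq : ∀ (e f : {e : Sym2 V // e ∈ M}) (v : V),
      v ∈ (e : Sym2 V) → v ∈ (f : Sym2 V) → e = f := by
    intro e f v he hf
    by_contra hne
    exact hM.2 _ e.2 _ f.2 (fun h => hne (Subtype.ext h)) v he hf
  have hsplitmem : ∀ (e : {e : Sym2 V // e ∈ M}) (x : V),
      x ∈ (e : Sym2 V) → x = a e ∨ x = b e := by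
    intro e x hx
    obtain ⟨y, hy⟩ := Sym2.mem_iff_exists.1 hx
    have hae := hamem e
    have hbe := hbmem e
    rw [hy, Sym2.mem_iff] at hae hbe
    rcases hae with h1 | h1
    · exact Or.inl h1.symm
    · rcases hbe with h2 | h2
      · exact Or.inr h2.symm
      · exact absurd (h1.trans h2.symm) (hab e)
  -- the edge containing a vertex
  have hedge : ∀ v : V, ∃ e : {e : Sym2 V // e ∈ M}, v ∈ (e : Sym2 V) := by
    intro v
    obtain ⟨e, he, hve⟩ := hperf v
    exact ⟨⟨e, he⟩, hve⟩
  set edgeOf : V → {e : Sym2 V // e ∈ M} := fun v => (hedge v).choose with hedgeOf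
  have hmemEdgeOf : ∀ v : V, v ∈ ((edgeOf v : {e : Sym2 V // e ∈ M}) : Sym2 V) :=
    fun v => (hedge v).choose_spec
  have hcardE : Fintype.card {e : Sym2 V // e ∈ M} = m := by
    rw [hm]
    exact Fintype.card_coe M
  -- card V = 2 * m
  have hcardV : Fintype.card V = 2 * m := by
    have h := Finset.card_eq_sum_card_fiberwise
      (f := edgeOf) (s := Finset.univ) (t := Finset.univ) (fun x _ => Finset.mem_univ _)
    have hfib : ∀ e : {e : Sym2 V // e ∈ M},
        (Finset.univ.filter (fun v => edgeOf v = e)).card = 2 := by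
      intro e
      have : Finset.univ.filter (fun v => edgeOf v = e) = {a e, b e} := by
        ext v
        rw [Finset.mem_filter, Finset.mem_insert, Finset.mem_singleton]
        constructor
        · rintro ⟨-, rfl⟩
          exact hsplitmem _ v (hmemEdgeOf v)
        · rintro (rfl | rfl)
          · exact ⟨Finset.mem_univ _, huniq _ _ (a e) (hmemEdgeOf (a e)) (hamem e)⟩
          · exact ⟨Finset.mem_univ _, huniq _ _ (b e) (hmemEdgeOf (b e)) (hbmem e)⟩
      rw [this, Finset.card_insert_of_notMem (by simp [hab e]), Finset.card_singleton]
    rw [← Finset.card_univ, h, Finset.sum_congr rfl (fun e _ => hfib e)]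
    simp [Finset.card_univ, hcardE]
    ring
  -- transversals
  set c : {e : Sym2 V // e ∈ M} → Bool → V := fun e t => if t then a e else b e with hc
  have hcmem : ∀ (e : {e : Sym2 V // e ∈ M}) (t : Bool), c e t ∈ (e : Sym2 V) := by
    intro e t
    rw [hc]
    cases t
    · simpa using hbmem e
    · simpa using hamem e
  set τ : ({e : Sym2 V // e ∈ M} → Bool) → Finset V :=
    fun σ => Finset.univ.image (fun e => c e (σ e)) with hτ
  have hτcard : ∀ σ, (τ σ).card = m := by
    intro σ
    rw [hτ]
    rw [Finset.card_image_of_injective _ ?_, Finset.card_univ, hcardE]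
    intro e f hef
    have hef' : c e (σ e) = c f (σ f) := hef
    refine huniq e f (c f (σ f)) ?_ (hcmem f (σ f))
    rw [← hef']
    exact hcmem e (σ e)
  -- the finset of maximal independent sets
  set S : Finset (Finset V) := Finset.univ.filter (fun s : Finset V => IsMaxIndep Γ ↑s) with hS
  have hmisS : mis Γ = S.card := by
    have himg : {s : Set V | IsMaxIndep Γ s} = (fun t : Finset V => (↑t : Set V)) '' ↑S := by
      ext s
      constructor
      · intro hs
        refine ⟨(Set.toFinite s).toFinset, ?_, (Set.toFinite s).coe_toFinset⟩
        rw [hS]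
        simp only [Finset.coe_filter, Set.mem_setOf_eq, Finset.mem_coe, Finset.mem_filter]
        exact ⟨Finset.mem_univ _, by rwa [(Set.toFinite s).coe_toFinset]⟩
      · rintro ⟨t, ht, rfl⟩
        rw [hS] at ht
        simp only [Finset.mem_coe, Finset.mem_filter] at ht
        exact ht.2
    rw [mis, himg, Set.ncard_image_of_injective _ Finset.coe_injective,
      Set.ncard_coe_finset]
  -- MIS contained in a transversal are relative MIS
  have hSgood : ∀ σ, ∀ s ∈ S, s ⊆ τ σ → s ∈ goodF Γ (τ σ) := by
    intro σ s hsS hsub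
    rw [hS, Finset.mem_filter] at hsS
    obtain ⟨-, hind, hmax⟩ := hsS
    rw [mem_goodF]
    refine ⟨hsub, fun x hx y hy hxy => hind x (by simpa using hx) y (by simpa using hy) hxy, ?_⟩
    intro x hx hxs
    by_contra hno
    push_neg at hno
    have hindt : IsIndep Γ (↑s ∪ {x}) := by
      intro p hp q hq hpq
      rcases hp with hp | hp
      · rcases hq with hq | hq
        · exact hind p hp q hq hpq
        · rw [Set.mem_singleton_iff] at hq
          subst hq
          intro hadjpq
          exact hno p (by simpa using hp) (Γ.adj_symm hadjpq)
      · rw [Set.mem_singleton_iff] at hp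
        subst hp
        rcases hq with hq | hq
        · exact fun hadjpq => hno q (by simpa using hq) hadjpq
        · rw [Set.mem_singleton_iff] at hq
          exact absurd hq.symm hpq
    have := hmax (↑s ∪ {x}) hindt (Set.subset_union_left)
    have hxmem : x ∈ (↑s ∪ {x} : Set V) := Or.inr rfl
    rw [this] at hxmem
    exact hxs (by simpa using hxmem)
  -- bound per transversal
  have hBσ : ∀ σ, ∑ s ∈ S.filter (fun s => s ⊆ τ σ), 2 ^ s.card ≤ 2 ^ m := by
    intro σ
    have hsub : S.filter (fun s => s ⊆ τ σ) ⊆ goodF Γ (τ σ) := by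
      intro s hs
      rw [Finset.mem_filter] at hs
      exact hSgood σ s hs.1 hs.2
    calc ∑ s ∈ S.filter (fun s => s ⊆ τ σ), 2 ^ s.card
        ≤ ∑ s ∈ goodF Γ (τ σ), 2 ^ s.card := Finset.sum_le_sum_of_subset hsub
      _ ≤ 2 ^ (τ σ).card := sumC Γ (τ σ)
      _ = 2 ^ m := by rw [hτcard σ]
  -- count of transversals containing a given MIS
  have hcount : ∀ s ∈ S, s.card ≤ m ∧
      2 ^ (m - s.card) ≤ (Finset.univ.filter
        (fun σ : {e : Sym2 V // e ∈ M} → Bool => s ⊆ τ σ)).card := by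
    intro s hsS
    have hind : ∀ x ∈ s, ∀ y ∈ s, x ≠ y → ¬ Γ.Adj x y := by
      rw [hS, Finset.mem_filter] at hsS
      intro x hx y hy
      exact hsS.2.1 x (by simpa using hx) y (by simpa using hy)
    have honeper : ∀ (e : {e : Sym2 V // e ∈ M}) (x y : V), x ∈ s → y ∈ s →
        x ∈ (e : Sym2 V) → y ∈ (e : Sym2 V) → x = y := by
      intro e x y hx hy hxe hye
      by_contra hxy
      exact hind x hx y hy hxy (hadj e x y hxe hye hxy)
    set Met : Finset {e : Sym2 V // e ∈ M} :=
      Finset.univ.filter (fun e => ∃ x ∈ s, x ∈ (e : Sym2 V)) with hMet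
    have hMetcard : Met.card = s.card := by
      rw [hMet]
      symm
      refine Finset.card_bij (fun x _ => edgeOf x) ?_ ?_ ?_
      · intro x hx
        rw [Finset.mem_filter]
        exact ⟨Finset.mem_univ _, x, hx, hmemEdgeOf x⟩
      · intro x hx y hy hexy
        have hexy' : edgeOf x = edgeOf y := hexy
        refine honeper (edgeOf x) x y hx hy (hmemEdgeOf x) ?_
        rw [hexy']
        exact hmemEdgeOf y
      · intro e he
        rw [Finset.mem_filter] at he
        obtain ⟨-, x, hx, hxe⟩ := he
        exact ⟨x, hx, (huniq _ _ x (hmemEdgeOf x) hxe)⟩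
    have hscard : s.card ≤ m := by
      rw [← hMetcard, ← hcardE, ← Finset.card_univ]
      exact Finset.card_le_card (Finset.subset_univ _)
    refine ⟨hscard, ?_⟩
    -- injection from functions on non-met edges
    have hcard1 : Fintype.card ({e : {e : Sym2 V // e ∈ M} // e ∉ Met} → Bool)
        = 2 ^ (m - s.card) := by
      rw [Fintype.card_fun, Fintype.card_bool]
      congr 1
      rw [Fintype.card_subtype_compl]
      congr 1
      · rw [Fintype.card_coe, hMetcard]
      
    have hcard2 : (Finset.univ.filter
          (fun σ : {e : Sym2 V // e ∈ M} → Bool => s ⊆ τ σ)).card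
        = Fintype.card {σ : {e : Sym2 V // e ∈ M} → Bool // s ⊆ τ σ} := by
      rw [Fintype.card_subtype]
    rw [hcard2, ← hcard1]
    refine Fintype.card_le_of_injective (fun g => ⟨fun e =>
      if h : e ∈ Met then decide (a e ∈ s) else g ⟨e, h⟩, ?_⟩) ?_
    · -- s ⊆ τ (Ψ g)
      intro x hx
      simp only [hτ, Finset.mem_image, Finset.mem_univ, true_and]
      set e := edgeOf x with he
      have heMet : e ∈ Met := by
        rw [hMet, Finset.mem_filter]
        exact ⟨Finset.mem_univ _, x, hx, hmemEdgeOf x⟩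
      refine ⟨e, ?_⟩
      simp only [dif_pos heMet, hc, decide_eq_true_eq]
      by_cases has : a e ∈ s
      · rw [if_pos has]
        exact (honeper e (a e) x has hx (hamem e) (hmemEdgeOf x))
      · rw [if_neg has]
        rcases hsplitmem e x (hmemEdgeOf x) with h | h
        · exact absurd (h ▸ hx) has
        · exact h.symm
    · -- injectivity
      intro g g' hgg'
      funext k
      have := congrArg (fun σ => σ.1 k.1) hgg'
      simpa [dif_neg k.2] using this
  -- the double count
  have hdouble : S.card * 2 ^ m ≤ 2 ^ m * 2 ^ m := by
    have hswap : ∑ σ : {e : Sym2 V // e ∈ M} → Bool,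
        ∑ s ∈ S, (if s ⊆ τ σ then 2 ^ s.card else 0)
        = ∑ s ∈ S, ∑ σ : {e : Sym2 V // e ∈ M} → Bool,
            (if s ⊆ τ σ then 2 ^ s.card else 0) := Finset.sum_comm
    have hupper : ∑ σ : {e : Sym2 V // e ∈ M} → Bool,
        ∑ s ∈ S, (if s ⊆ τ σ then 2 ^ s.card else 0) ≤ 2 ^ m * 2 ^ m := by
      calc ∑ σ : {e : Sym2 V // e ∈ M} → Bool,
            ∑ s ∈ S, (if s ⊆ τ σ then 2 ^ s.card else 0)
          ≤ ∑ _σ : {e : Sym2 V // e ∈ M} → Bool, 2 ^ m := by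
            refine Finset.sum_le_sum (fun σ _ => ?_)
            rw [← Finset.sum_filter]
            exact hBσ σ
        _ = 2 ^ m * 2 ^ m := by
            rw [Finset.sum_const, Finset.card_univ, Fintype.card_fun, Fintype.card_bool,
              hcardE, smul_eq_mul]
    have hlower : S.card * 2 ^ m ≤ ∑ s ∈ S, ∑ σ : {e : Sym2 V // e ∈ M} → Bool,
        (if s ⊆ τ σ then 2 ^ s.card else 0) := by
      have : ∀ s ∈ S, 2 ^ m ≤ ∑ σ : {e : Sym2 V // e ∈ M} → Bool,
          (if s ⊆ τ σ then 2 ^ s.card else 0) := by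
        intro s hs
        obtain ⟨hscard, hσcount⟩ := hcount s hs
        have : ∑ σ : {e : Sym2 V // e ∈ M} → Bool, (if s ⊆ τ σ then 2 ^ s.card else 0)
            = (Finset.univ.filter (fun σ : {e : Sym2 V // e ∈ M} → Bool => s ⊆ τ σ)).card
              * 2 ^ s.card := by
          rw [← Finset.sum_filter, Finset.sum_const, smul_eq_mul]
        rw [this]
        calc 2 ^ m = 2 ^ (m - s.card) * 2 ^ s.card := by
              rw [← pow_add]
              congr 1
              omega
          _ ≤ _ := Nat.mul_le_mul_right _ hσcount
      calc S.card * 2 ^ m = ∑ _s ∈ S, 2 ^ m := by rw [Finset.sum_const, smul_eq_mul]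
        _ ≤ _ := Finset.sum_le_sum this
    calc S.card * 2 ^ m ≤ ∑ s ∈ S, ∑ σ : {e : Sym2 V // e ∈ M} → Bool,
          (if s ⊆ τ σ then 2 ^ s.card else 0) := hlower
      _ = _ := hswap.symm
      _ ≤ 2 ^ m * 2 ^ m := hupper
  have hfinal : mis Γ ≤ 2 ^ m := by
    rw [hmisS]
    exact Nat.le_of_mul_le_mul_right hdouble (pow_pos (by norm_num : (0:ℕ) < 2) m)
  -- conclude over ℝ
  have hexp : ((Fintype.card V : ℝ)) / 2 = (m : ℝ) := by
    rw [hcardV]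
    push_cast
    ring
  rw [hexp, Real.rpow_natCast]
  calc (mis Γ : ℝ) ≤ ((2 ^ m : ℕ) : ℝ) := by exact_mod_cast hfinal
    _ = (2 : ℝ) ^ m := by push_cast; ring
end

section
/- For every prime p ≥ 29, let G = (ℤ/3ℤ)² ⊕ ℤ/23ℤ ⊕ ℤ/pℤ and n = |G| = 207p. Then the number of maximal sum-free subsets satisfies f_max(G) ≥ 3^{n/9} = 3^{23p}. -/
/-- A set `S` in an additive group is sum-free: no `x, y, z ∈ S`
(not necessarily distinct) with `x + y = z`. -/
def SumFreeSet {G : Type} [Add G] (S : Set G) : Prop :=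
  ∀ x ∈ S, ∀ y ∈ S, x + y ∉ S

/-- A maximal (under inclusion) sum-free set. -/
def IsMaxSumFree {G : Type} [Add G] (S : Set G) : Prop :=
  SumFreeSet S ∧ ∀ T : Set G, SumFreeSet T → S ⊆ T → T = S

/-- `fmax G`: the number of maximal sum-free subsets of `G`. -/
noncomputable def fmax (G : Type) [Add G] : ℕ :=
  Set.ncard {S : Set G | IsMaxSumFree S}

/-- `mu G`: the maximum size of a sum-free subset of `G`. -/
noncomputable def mu (G : Type) [Add G] : ℕ :=
  sSup {n : ℕ | ∃ S : Set G, SumFreeSet S ∧ S.ncard = n}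

/-- A set `S` is distinct sum-free: no pairwise distinct `x, y, z ∈ S` with `x + y = z`. -/
def DistinctSumFreeSet {G : Type} [Add G] (S : Set G) : Prop :=
  ∀ x ∈ S, ∀ y ∈ S, ∀ z ∈ S, x ≠ y → x ≠ z → y ≠ z → x + y ≠ z

/-- A maximal (under inclusion) distinct sum-free set. -/
def IsMaxDistinctSumFree {G : Type} [Add G] (S : Set G) : Prop :=
  DistinctSumFreeSet S ∧ ∀ T : Set G, DistinctSumFreeSet T → S ⊆ T → T = S

/-- `fstarmax G`: the number of maximal distinct sum-free subsets of `G`. -/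
noncomputable def fstarmax (G : Type) [Add G] : ℕ :=
  Set.ncard {S : Set G | IsMaxDistinctSumFree S}

section Aux

lemma sumFree_subset {G : Type} [Add G] {S T : Set G} (hTS : T ⊆ S)
    (hS : SumFreeSet S) : SumFreeSet T :=
  fun x hx y hy hxy => hS x (hTS hx) y (hTS hy) (hTS hxy)

lemma exists_max {G : Type} [Add G] [Finite G] {S : Set G} (hS : SumFreeSet S) :
    ∃ M : Set G, IsMaxSumFree M ∧ S ⊆ M := by
  obtain ⟨M, hM, hmax⟩ := Set.Finite.exists_maximalFor id
    {T : Set G | SumFreeSet T ∧ S ⊆ T} (Set.toFinite _) ⟨S, hS, subset_rfl⟩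
  exact ⟨M, ⟨hM.1, fun T hT hMT => Set.Subset.antisymm (hmax ⟨hT, hM.2.trans hMT⟩ hMT) hMT⟩, hM.2⟩

variable {p : ℕ}

def seed (p : ℕ) (σ : ZMod 23 × ZMod p → ZMod 3) :
    Set (ZMod 3 × ZMod 3 × ZMod 23 × ZMod p) :=
  insert (0, 1, 0) (Set.range fun k => (1, σ k, k))

lemma zmod3_add_one_ne : ∀ a : ZMod 3, ¬ (1 + a = a) := by decide
lemma zmod3_add_one_ne' : ∀ a : ZMod 3, ¬ (a + 1 = a) := by decide

lemma seed_sumFree (σ : ZMod 23 × ZMod p → ZMod 3) : SumFreeSet (seed p σ) := by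
  rintro x hx y hy hxy
  simp only [seed, Set.mem_insert_iff, Set.mem_range] at hx hy hxy
  rcases hx with rfl | ⟨k, rfl⟩ <;> rcases hy with rfl | ⟨l, rfl⟩
  · rcases hxy with h | ⟨m, h⟩
    · rw [Prod.ext_iff, Prod.ext_iff] at h
      exact absurd h.2.1 (by simp)
    · rw [Prod.ext_iff] at h
      exact absurd h.1 (by simp)
  · rcases hxy with h | ⟨m, h⟩
    · rw [Prod.ext_iff] at h
      exact absurd h.1 (by simp)
    · rw [Prod.ext_iff, Prod.ext_iff, Prod.ext_iff] at h
      obtain ⟨h1, h2, h3, h4⟩ := h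
      have hlm : m = l := by
        simp only [Prod.fst_add, Prod.snd_add] at h3 h4
        simp at h3 h4
        exact Prod.ext_iff.mpr ⟨h3, h4⟩
      subst hlm
      simp only [Prod.snd_add, Prod.fst_add] at h2
      exact zmod3_add_one_ne (σ m) (by simpa using h2.symm)
  · rcases hxy with h | ⟨m, h⟩
    · rw [Prod.ext_iff] at h
      exact absurd h.1 (by simp)
    · rw [Prod.ext_iff, Prod.ext_iff, Prod.ext_iff] at h
      obtain ⟨h1, h2, h3, h4⟩ := h
      have hlm : m = k := by
        simp only [Prod.fst_add, Prod.snd_add] at h3 h4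
        simp at h3 h4
        exact Prod.ext_iff.mpr ⟨h3, h4⟩
      subst hlm
      simp only [Prod.snd_add, Prod.fst_add] at h2
      exact zmod3_add_one_ne' (σ m) (by simpa using h2.symm)
  · rcases hxy with h | ⟨m, h⟩
    · rw [Prod.ext_iff] at h
      simp only [Prod.fst_add] at h
      exact absurd h.1 (by decide)
    · rw [Prod.ext_iff] at h
      simp only [Prod.fst_add] at h
      exact absurd h.1 (by decide)

lemma seed_conflict {σ τ : ZMod 23 × ZMod p → ZMod 3} (h : σ ≠ τ) :
    ¬ SumFreeSet (seed p σ ∪ seed p τ) := by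
  obtain ⟨k₀, hk₀⟩ := Function.ne_iff.mp h
  have key : ∀ a b : ZMod 3, a ≠ b → b = a + 1 ∨ a = b + 1 := by decide
  intro hsf
  rcases key _ _ hk₀ with hcase | hcase
  · refine hsf (1, σ k₀, k₀) ?_ (0, 1, 0) ?_ ?_
    · exact Or.inl (Set.mem_insert_iff.mpr (Or.inr ⟨k₀, rfl⟩))
    · exact Or.inr (Set.mem_insert_iff.mpr (Or.inl rfl))
    · refine Or.inr (Set.mem_insert_iff.mpr (Or.inr ⟨k₀, ?_⟩))
      rw [Prod.ext_iff, Prod.ext_iff]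
      refine ⟨by simp, by simpa using hcase, by simp⟩
  · refine hsf (1, τ k₀, k₀) ?_ (0, 1, 0) ?_ ?_
    · exact Or.inr (Set.mem_insert_iff.mpr (Or.inr ⟨k₀, rfl⟩))
    · exact Or.inl (Set.mem_insert_iff.mpr (Or.inl rfl))
    · refine Or.inl (Set.mem_insert_iff.mpr (Or.inr ⟨k₀, ?_⟩))
      rw [Prod.ext_iff, Prod.ext_iff]
      refine ⟨by simp, by simpa using hcase, by simp⟩

end Aux

theorem stmt6 (p : ℕ) (hp : Nat.Prime p) (hp29 : 29 ≤ p) :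
    3 ^ (23 * p) ≤ fmax (ZMod 3 × ZMod 3 × ZMod 23 × ZMod p) := by
  haveI : NeZero p := ⟨hp.ne_zero⟩
  have hext : ∀ σ : ZMod 23 × ZMod p → ZMod 3,
      ∃ M : Set (ZMod 3 × ZMod 3 × ZMod 23 × ZMod p),
        IsMaxSumFree M ∧ seed p σ ⊆ M := fun σ => exists_max (seed_sumFree σ)
  choose M hM hsub using hext
  have hinj : Function.Injective M := by
    intro σ τ hMeq
    by_contra hne
    exact seed_conflict hne
      (sumFree_subset (Set.union_subset (hsub σ) (hMeq ▸ hsub τ)) (hM σ).1)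
  have h1 : Nat.card ((ZMod 23 × ZMod p) → ZMod 3)
      ≤ Set.ncard {S : Set (ZMod 3 × ZMod 3 × ZMod 23 × ZMod p) | IsMaxSumFree S} := by
    rw [← Nat.card_coe_set_eq]
    exact Nat.card_le_card_of_injective
      (fun σ => (⟨M σ, hM σ⟩ : {S : Set (ZMod 3 × ZMod 3 × ZMod 23 × ZMod p) | IsMaxSumFree S}))
      (fun a b hab => hinj (congrArg Subtype.val hab))
  have h2 : Nat.card ((ZMod 23 × ZMod p) → ZMod 3) = 3 ^ (23 * p) := by
    rw [Nat.card_eq_fintype_card, Fintype.card_fun, Fintype.card_prod,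
      ZMod.card 23, ZMod.card p]
    norm_num
  rw [fmax]
  omega
end

section
/- Let Γ be a finite simple graph and Γ' an induced subgraph of Γ (the subgraph induced on any subset of the vertices). Then mis(Γ') ≤ mis(Γ), i.e., the number of maximal independent sets of an induced subgraph never exceeds that of the whole graph. -/
lemma exists_maxIndep_superset {V : Type} (Γ : SimpleGraph V) (t : Set V)
    (ht : IsIndep Γ t) : ∃ B, IsMaxIndep Γ B ∧ t ⊆ B := by
  obtain ⟨m, hm, hmax⟩ := zorn_subset_nonempty {u : Set V | IsIndep Γ u}
    (fun c hc hchain hne => by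
      refine ⟨⋃₀ c, ?_, fun s hs => Set.subset_sUnion_of_mem hs⟩
      intro x hx y hy hxy
      obtain ⟨a, ha, hxa⟩ := hx
      obtain ⟨b, hb, hyb⟩ := hy
      rcases hchain.total ha hb with hab | hba
      · exact hc hb x (hab hxa) y hyb hxy
      · exact hc ha x hxa y (hba hyb) hxy) t ht
  exact ⟨m, ⟨hmax.1, fun u hu hsub => (hmax.2 hu hsub).antisymm hsub⟩, hm⟩

theorem stmt17 {V : Type} [Fintype V] (Γ : SimpleGraph V) (s : Set V) :
    mis (Γ.induce s) ≤ mis Γ := by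
  classical
  -- choose, for each maximal indep set A of the induced graph, a maximal extension in Γ
  have key : ∀ A : Set s, IsMaxIndep (Γ.induce s) A →
      ∃ B : Set V, IsMaxIndep Γ B ∧ Subtype.val '' A ⊆ B := by
    intro A hA
    apply exists_maxIndep_superset
    rintro x ⟨a, ha, rfl⟩ y ⟨b, hb, rfl⟩ hxy hadj
    exact hA.1 a ha b hb (fun h => hxy (by rw [h])) hadj
  choose f hf₁ hf₂ using fun A (hA : IsMaxIndep (Γ.induce s) A) => key A hA
  have hrec : ∀ A (hA : IsMaxIndep (Γ.induce s) A),
      Subtype.val ⁻¹' (f A hA) = A := by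
    intro A hA
    apply hA.2
    · intro x hx y hy hxy hadj
      exact (hf₁ A hA).1 x hx y hy (fun h => hxy (Subtype.ext h)) hadj
    · intro a ha
      exact hf₂ A hA ⟨a, ha, rfl⟩
  have hfin : {B : Set V | IsMaxIndep Γ B}.Finite := Set.toFinite _
  unfold mis
  apply Set.ncard_le_ncard_of_injOn (fun A => if h : IsMaxIndep (Γ.induce s) A then f A h else ∅)
  · intro A hA
    simp only [Set.mem_setOf_eq] at hA ⊢
    rw [dif_pos hA]
    exact hf₁ A hA
  · intro A hA A' hA' h
    simp only [Set.mem_setOf_eq] at hA hA'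
    simp only [dif_pos hA, dif_pos hA'] at h
    rw [← hrec A hA, ← hrec A' hA', h]
end

section
/- Let Γ be a finite simple graph and let uv be an edge of Γ. Then mis(Γ) ≤ mis(Γ − ({v} ∪ N(v))) + mis(Γ − ({u} ∪ N(u))) + mis(Γ − v; ū), where mis(Γ − v; ū) denotes the number of maximal independent sets of the induced subgraph Γ − v that do not contain u. -/
lemma aux_card {V : Type} [Fintype V] (Γ : SimpleGraph V) (w : V) :
    Set.ncard {s : Set V | IsMaxIndep Γ s ∧ w ∈ s}
      ≤ mis (Γ.induce (({w} ∪ Γ.neighborSet w)ᶜ)) := by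
  classical
  set C : Set V := ({w} ∪ Γ.neighborSet w)ᶜ with hC
  have mem_C : ∀ s : Set V, IsIndep Γ s → w ∈ s → ∀ a ∈ s, a ≠ w → a ∈ C := by
    intro s hs hw a ha haw
    simp only [hC, Set.mem_compl_iff, Set.mem_union, Set.mem_singleton_iff,
      SimpleGraph.mem_neighborSet]
    push_neg
    exact ⟨haw, fun h => hs w hw a ha (Ne.symm haw) h⟩
  have hC_nadj : ∀ x : C, ¬ Γ.Adj w x.val := by
    intro x hx
    have h2 := x.2
    simp only [hC, Set.mem_compl_iff, Set.mem_union, Set.mem_singleton_iff,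
      SimpleGraph.mem_neighborSet] at h2
    push_neg at h2
    exact h2.2 hx
  apply Set.ncard_le_ncard_of_injOn (fun s => (Subtype.val ⁻¹' s : Set C))
  · rintro s ⟨⟨hsi, hsm⟩, hw⟩
    constructor
    · intro x hx y hy hxy hadj
      exact hsi x.val hx y.val hy (fun h => hxy (Subtype.ext h)) hadj
    · intro t hti hst
      set t' : Set V := (Subtype.val '' t) ∪ {w} with ht'def
      have ht'i : IsIndep Γ t' := by
        rintro x hx y hy hxy hadj
        rcases hx with hx | hx
        · rcases hy with hy | hy
          · obtain ⟨x', hx', rfl⟩ := hx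
            obtain ⟨y', hy', rfl⟩ := hy
            exact hti x' hx' y' hy' (fun h => hxy (congrArg _ h)) hadj
          · obtain ⟨x', hx', rfl⟩ := hx
            rw [Set.mem_singleton_iff.mp hy] at hadj
            exact hC_nadj x' hadj.symm
        · rcases hy with hy | hy
          · obtain ⟨y', hy', rfl⟩ := hy
            rw [Set.mem_singleton_iff.mp hx] at hadj
            exact hC_nadj y' hadj
          · exact hxy ((Set.mem_singleton_iff.mp hx).trans
              (Set.mem_singleton_iff.mp hy).symm)
      have hst' : s ⊆ t' := by
        intro a ha
        by_cases haw : a = w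
        · exact Or.inr (haw ▸ rfl)
        · have haC : a ∈ C := mem_C s hsi hw a ha haw
          exact Or.inl ⟨⟨a, haC⟩, hst ha, rfl⟩
      have ht's : t' = s := hsm t' ht'i hst'
      apply Set.Subset.antisymm
      · intro b hb
        have : b.val ∈ t' := Or.inl ⟨b, hb, rfl⟩
        rw [ht's] at this
        exact this
      · exact hst
  · rintro s ⟨⟨hsi, _⟩, hws⟩ s' ⟨⟨hsi', _⟩, hws'⟩ heq
    have key : ∀ (r : Set V), IsIndep Γ r → w ∈ r →
        r = (Subtype.val '' (Subtype.val ⁻¹' r : Set C)) ∪ {w} := by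
      intro r hri hwr
      apply Set.Subset.antisymm
      · intro a ha
        by_cases haw : a = w
        · exact Or.inr (haw ▸ rfl)
        · exact Or.inl ⟨⟨a, mem_C r hri hwr a ha haw⟩, ha, rfl⟩
      · rintro a (⟨x, hx, rfl⟩ | ha)
        · exact hx
        · exact (Set.mem_singleton_iff.mp ha) ▸ hwr
    rw [key s hsi hws, key s' hsi' hws']
    exact congrArg (fun t : Set C => Subtype.val '' t ∪ {w}) heq

theorem stmt19 {V : Type} [Fintype V] (Γ : SimpleGraph V) (u v : V)
    (huv : Γ.Adj u v) :
    mis Γ ≤ mis (Γ.induce (({v} ∪ Γ.neighborSet v)ᶜ))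
      + mis (Γ.induce (({u} ∪ Γ.neighborSet u)ᶜ))
      + Set.ncard {s : Set V | s ⊆ ({v}ᶜ : Set V) ∧ IsIndep Γ s ∧
          (∀ t : Set V, t ⊆ ({v}ᶜ : Set V) → IsIndep Γ t → s ⊆ t → t = s) ∧ u ∉ s} := by
  classical
  set A := {s : Set V | IsMaxIndep Γ s ∧ v ∈ s} with hA
  set B := {s : Set V | IsMaxIndep Γ s ∧ u ∈ s} with hB
  set D := {s : Set V | s ⊆ ({v}ᶜ : Set V) ∧ IsIndep Γ s ∧
      (∀ t : Set V, t ⊆ ({v}ᶜ : Set V) → IsIndep Γ t → s ⊆ t → t = s) ∧ u ∉ s} with hD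
  have cover : {s : Set V | IsMaxIndep Γ s} ⊆ A ∪ B ∪ D := by
    intro s hs
    by_cases hv : v ∈ s
    · exact Or.inl (Or.inl ⟨hs, hv⟩)
    by_cases hu : u ∈ s
    · exact Or.inl (Or.inr ⟨hs, hu⟩)
    · refine Or.inr ⟨?_, hs.1, fun t _ hti hst => hs.2 t hti hst, hu⟩
      intro a ha hav
      exact hv ((Set.mem_singleton_iff.mp hav) ▸ ha)
  calc mis Γ ≤ (A ∪ B ∪ D).ncard :=
        Set.ncard_le_ncard cover (Set.toFinite _)
    _ ≤ (A ∪ B).ncard + D.ncard := Set.ncard_union_le _ _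
    _ ≤ A.ncard + B.ncard + D.ncard := by
        exact Nat.add_le_add_right (Set.ncard_union_le _ _) _
    _ ≤ _ := by
        exact Nat.add_le_add_right
          (Nat.add_le_add (aux_card Γ v) (aux_card Γ u)) _
end
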